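/- arXiv:2110.02132 — 3 statements merged into one kernel-verified Lean document; each statement's English description precedes it below -/
import Mathlib

section
/- Let $V$ be a real inner product space and $q>0$ an integer. Let $0=t^0<\cdots<t^N=T$ and let $\varphi\in H^1(0,T)$ (continuously differentiable suffices). Define $\tilde{\mathcal P}^{\Delta t}\varphi$ to be the unique piecewise polynomial of degree $\le q$ on each $(t^{k-1},t^k)$ satisfying $\int_{t^{k-1}}^{t^k}(\tilde{\mathcal P}^{\Delta t}\varphi - \varphi)w = 0$ for all polynomials $w$ of degree $\le q-1$, and $(\tilde{\mathcal P}^{\Delta t}\varphi)(t^{k,-}) = \varphi(t^k)$, with $(\tilde{\mathcal P}^{\Delta t}\varphi)_0^- = \varphi(0)$. Then for every piecewise polynomial $w$ of degree $\le q$ on the same partition, $\int_0^T \partial_t\varphi\, w = \int_0^T \tilde\partial_t(\tilde{\mathcal P}^{\Delta t}\varphi)\, w$, where $\tilde\partial_t$ is the DG time derivative defined by $\int_0^T \tilde\partial_t\psi\,w = \sum_{k=1}^N\int_{t^{k-1}}^{t^k}\partial_t\psi\,w + \sum_{k=1}^N[\psi]_{k-1}w_{k-1}^+$. -/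
/-!
On each subinterval integrate `(φ - P_k)'` against `W_k` by parts. The boundary term at
`t^{k+1}` vanishes because `P_k` interpolates `φ` there, and the volume term
`∫ (φ - P_k) W_k'` vanishes by orthogonality, since `W_k'` has degree `≤ q - 1`. What is left
is `(P_k - φ)(t^k) W_k(t^k)`, which is the jump of the interpolant at `t^k` because the
previous piece interpolates `φ` at `t^k` (and the initial value is `φ 0`).
-/

open Finset intervalIntegral Polynomial

theorem Polynomial.degree_derivative_lt_of_natDegree_le {R : Type*} [Semiring R] {p : R[X]}
    {q : ℕ} (hp : p.natDegree ≤ q) : (derivative p).degree < q := by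
  by_cases hp0 : p = 0
  · simp [hp0]
  · calc (derivative p).degree < p.degree := degree_derivative_lt hp0
      _ ≤ p.natDegree := degree_le_natDegree
      _ ≤ q := by exact_mod_cast hp

theorem integral_deriv_mul_eq_integral_derivative_mul_add_of_orthogonal
    {a b : ℝ} {φ φ' : ℝ → ℝ} (hφ : ∀ x ∈ Set.uIcc a b, HasDerivAt φ (φ' x) x)
    (hφ' : IntervalIntegrable φ' MeasureTheory.volume a b) {P W : ℝ[X]}
    (horth : ∫ x in a..b, (P.eval x - φ x) * (derivative W).eval x = 0)
    (hend : P.eval b = φ b) :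
    ∫ x in a..b, φ' x * W.eval x
      = (∫ x in a..b, (derivative P).eval x * W.eval x) + (P.eval a - φ a) * W.eval a := by
  have hparts := integral_mul_deriv_eq_deriv_mul (u := fun x => W.eval x)
    (v := fun x => φ x - P.eval x) (fun x _ => W.hasDerivAt x)
    (fun x hx => (hφ x hx).sub (P.hasDerivAt x))
    ((derivative W).continuous.intervalIntegrable a b)
    (hφ'.sub ((derivative P).continuous.intervalIntegrable a b))
  have hvolume : ∫ x in a..b, (derivative W).eval x * (φ x - P.eval x) = 0 := by
    rw [← neg_eq_zero, ← integral_neg, ← horth]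
    congr 1 with x
    ring
  have hsplit : ∫ x in a..b, W.eval x * (φ' x - (derivative P).eval x)
      = (∫ x in a..b, φ' x * W.eval x) - ∫ x in a..b, (derivative P).eval x * W.eval x := by
    rw [← integral_sub (hφ'.mul_continuousOn W.continuous.continuousOn)
      ((derivative P).continuous.intervalIntegrable a b |>.mul_continuousOn
        W.continuous.continuousOn)]
    congr 1 with x
    ring
  rw [hsplit, hvolume, hend] at hparts
  linarith

theorem tilde_P_time_derivative_orthogonality_general
    (q : ℕ)
    (N : ℕ) (t : ℕ → ℝ)
    (ht0 : t 0 = 0)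
    (φ : ℝ → ℝ) (hφ : ContDiff ℝ 1 φ)
    (P : ℕ → Polynomial ℝ)
    (hPorth : ∀ k < N, ∀ w : Polynomial ℝ, w.degree < (q : ℕ) →
      ∫ x in t k..t (k + 1), ((P k).eval x - φ x) * w.eval x = 0)
    (hPend : ∀ k < N, (P k).eval (t (k + 1)) = φ (t (k + 1)))
    (W : ℕ → Polynomial ℝ)
    (hW : ∀ k, (W k).natDegree ≤ q) :
    ∑ k ∈ Finset.range N, ∫ x in t k..t (k + 1), deriv φ x * (W k).eval x
      = (∑ k ∈ Finset.range N,
          ∫ x in t k..t (k + 1), (Polynomial.derivative (P k)).eval x * (W k).eval x)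
        + ∑ k ∈ Finset.range N,
            ((P k).eval (t k) - (if k = 0 then φ 0 else (P (k - 1)).eval (t k)))
              * (W k).eval (t k) := by
  rw [← sum_add_distrib]
  refine sum_congr rfl fun k hk => ?_
  have hkN : k < N := mem_range.mp hk
  have hleft : (if k = 0 then φ 0 else (P (k - 1)).eval (t k)) = φ (t k) := by
    rcases k with _ | k
    · simp [ht0]
    · simpa using hPend k (by omega)
  rw [hleft]
  exact integral_deriv_mul_eq_integral_derivative_mul_add_of_orthogonal
    (fun x _ => ((hφ.differentiable one_ne_zero) x).hasDerivAt)
    ((hφ.continuous_deriv le_rfl).intervalIntegrable _ _)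
    (hPorth k hkN _ (degree_derivative_lt_of_natDegree_le (hW k))) (hPend k hkN)

/-- Lemma 6.2 (scalar case): time-derivative orthogonality of the special
interpolant `𝒫̃^{Δt}`. The interpolant is represented by its polynomial pieces
`P k` of degree `≤ q` on `(t k, t (k+1))`, characterized by `L²`-orthogonality to
polynomials of degree `≤ q - 1` and right-endpoint interpolation, with prescribed
initial value `(𝒫̃^{Δt}φ)_0^- = φ 0`. For every piecewise polynomial test function
`w` of degree `≤ q` (pieces `W k`), the integral `∫_0^T ∂_t φ w` equals the DG time
derivative of the interpolant paired with `w`. -/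
theorem tilde_P_time_derivative_orthogonality
    (q : ℕ) (hq : 0 < q)
    (N : ℕ) (hN : 0 < N) (T : ℝ) (t : ℕ → ℝ)
    (ht0 : t 0 = 0) (htN : t N = T)
    (hmono : ∀ k < N, t k < t (k + 1))
    (φ : ℝ → ℝ) (hφ : ContDiff ℝ 1 φ)
    (P : ℕ → Polynomial ℝ)
    (hPdeg : ∀ k, (P k).natDegree ≤ q)
    (hPorth : ∀ k < N, ∀ w : Polynomial ℝ, w.degree < (q : ℕ) →
      ∫ x in t k..t (k + 1), ((P k).eval x - φ x) * w.eval x = 0)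
    (hPend : ∀ k < N, (P k).eval (t (k + 1)) = φ (t (k + 1)))
    (W : ℕ → Polynomial ℝ)
    (hW : ∀ k, (W k).natDegree ≤ q) :
    ∑ k ∈ Finset.range N, ∫ x in t k..t (k + 1), deriv φ x * (W k).eval x
      = (∑ k ∈ Finset.range N,
          ∫ x in t k..t (k + 1), (Polynomial.derivative (P k)).eval x * (W k).eval x)
        + ∑ k ∈ Finset.range N,
            ((P k).eval (t k) - (if k = 0 then φ 0 else (P (k - 1)).eval (t k)))
              * (W k).eval (t k) :=
  tilde_P_time_derivative_orthogonality_general q N t ht0 φ hφ P hPorth hPend W hW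
end

section
/- Existence and uniqueness of the interpolant $\tilde{\mathcal P}^{\Delta t}$: on a single interval $(a,b)$, for any continuous function $\varphi$ on $[a,b]$, there exists a unique polynomial $P$ of degree $\le q$ such that $\int_a^b (P-\varphi)w = 0$ for all polynomials $w$ of degree $\le q-1$ and $P(b) = \varphi(b)$. -/
open Polynomial MeasureTheory intervalIntegral

/-- Integrability of a product of two polynomial evaluations. -/
private lemma pp_integrable (p w : Polynomial ℝ) (a b : ℝ) :
    IntervalIntegrable (fun x => p.eval x * w.eval x) volume a b :=
  ((p.continuous_aeval.mul w.continuous_aeval).intervalIntegrable a b)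

/-- Key injectivity lemma. -/
private lemma key_inj (q : ℕ) (a b : ℝ) (hab : a < b) (D : Polynomial ℝ)
    (hdeg : D.natDegree ≤ q)
    (horth : ∀ w : Polynomial ℝ, w.degree < (q : ℕ) →
      ∫ x in a..b, D.eval x * w.eval x = 0)
    (hb : D.eval b = 0) : D = 0 := by
  by_contra hD
  obtain ⟨Q, hQ⟩ : (X - C b) ∣ D := dvd_iff_isRoot.mpr hb
  have hQ0 : Q ≠ 0 := by rintro rfl; simp at hQ; exact hD (by simp [hQ])
  have hXb : (X - C b : Polynomial ℝ) ≠ 0 := X_sub_C_ne_zero b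
  have hdQ : Q.natDegree + 1 ≤ q := by
    have := natDegree_mul hXb hQ0
    rw [hQ, this, natDegree_X_sub_C] at hdeg
    omega
  have hQlt : Q.degree < (q : ℕ) := by
    refine lt_of_le_of_lt degree_le_natDegree ?_
    exact_mod_cast Nat.lt_of_lt_of_le (Nat.lt_succ_self _) hdQ
  have h0 := horth Q hQlt
  -- The integrand is (x - b) * Q(x)^2
  have hneg : ∫ x in a..b, (b - x) * Q.eval x ^ 2 = 0 := by
    have : (fun x => (b - x) * Q.eval x ^ 2) = fun x => -(D.eval x * Q.eval x) := by
      funext x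
      rw [hQ]
      simp [eval_mul]
      ring
    rw [this, intervalIntegral.integral_neg, h0, neg_zero]
  -- But there is a point where Q ≠ 0, giving a strictly positive integral
  obtain ⟨c, hc, hcQ⟩ : ∃ c ∈ Set.Ioo a b, Q.eval c ≠ 0 := by
    have hinf : (Set.Ioo a b).Infinite := Set.Ioo_infinite hab
    have : ¬ (Set.Ioo a b ⊆ ↑Q.roots.toFinset) := fun h =>
      hinf (Set.Finite.subset (Q.roots.toFinset.finite_toSet) h)
    obtain ⟨c, hc, hc'⟩ := Set.not_subset.mp this
    refine ⟨c, hc, fun h => hc' ?_⟩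
    simp only [Multiset.mem_toFinset, Finset.coe_sort_coe, Finset.mem_coe,
      Multiset.mem_toFinset, mem_roots hQ0]
    exact h
  have hpos : 0 < ∫ x in a..b, (b - x) * Q.eval x ^ 2 := by
    apply intervalIntegral.integral_pos hab
    · exact ((continuous_const.sub continuous_id).mul
        (Q.continuous_aeval.pow 2)).continuousOn
    · intro x hx
      have : 0 ≤ b - x := by linarith [hx.2]
      positivity
    · exact ⟨c, ⟨hc.1.le, hc.2.le⟩, by
        have h1 : 0 < b - c := by linarith [hc.2]
        have h2 : 0 < Q.eval c ^ 2 := by positivity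
        positivity⟩
  rw [hneg] at hpos
  exact lt_irrefl 0 hpos

/-- From orthogonality to monomials of degree `< q` to all polynomials of
degree `< q`. -/
private lemma orth_of_monomials (q : ℕ) (a b : ℝ) (f : ℝ → ℝ)
    (hint : ∀ i : ℕ, IntervalIntegrable (fun x => f x * x ^ i) volume a b)
    (horth : ∀ i : ℕ, i < q → ∫ x in a..b, f x * x ^ i = 0) :
    ∀ w : Polynomial ℝ, w.degree < (q : ℕ) →
      ∫ x in a..b, f x * w.eval x = 0 := by
  intro w hw
  rcases eq_or_ne w 0 with rfl | hw0
  · simp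
  · have hnd : w.natDegree < q := (natDegree_lt_iff_degree_lt hw0).mpr hw
    have heval : ∀ x : ℝ, w.eval x = ∑ i ∈ Finset.range q, w.coeff i * x ^ i :=
      fun x => eval_eq_sum_range' hnd x
    have : (fun x => f x * w.eval x)
        = fun x => ∑ i ∈ Finset.range q, w.coeff i * (f x * x ^ i) := by
      funext x
      rw [heval x, Finset.mul_sum]
      congr 1
      funext i
      ring
    rw [this, intervalIntegral.integral_finset_sum]
    · refine Finset.sum_eq_zero fun i hi => ?_
      rw [intervalIntegral.integral_const_mul, horth i (Finset.mem_range.mp hi), mul_zero]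
    · intro i _
      exact (hint i).const_mul _

/-- Existence and uniqueness of the interpolant `𝒫̃^{Δt}` on a single interval:
for any continuous `φ` on `[a, b]`, there is a unique polynomial `P` of degree
`≤ q` that is `L²(a,b)`-orthogonal to all polynomials of degree `≤ q - 1` up to
`φ`, and matches `φ` at the right endpoint. -/
theorem tilde_P_exists_unique
    (q : ℕ) (a b : ℝ) (hab : a < b)
    (φ : ℝ → ℝ) (hφ : ContinuousOn φ (Set.Icc a b)) :
    ∃! P : Polynomial ℝ, P.natDegree ≤ q ∧
      (∀ w : Polynomial ℝ, w.degree < (q : ℕ) →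
        ∫ x in a..b, (P.eval x - φ x) * w.eval x = 0) ∧
      P.eval b = φ b := by
  have hcu : Set.uIcc a b = Set.Icc a b := Set.uIcc_of_le hab.le
  have pint : ∀ (p : Polynomial ℝ) (i : ℕ),
      IntervalIntegrable (fun x => p.eval x * x ^ i) volume a b :=
    fun p i => (p.continuous_aeval.mul (continuous_pow i)).intervalIntegrable a b
  have hφint : ∀ i : ℕ, IntervalIntegrable (fun x => φ x * x ^ i) volume a b := by
    intro i
    apply ContinuousOn.intervalIntegrable
    rw [hcu]
    exact hφ.mul (continuous_pow i).continuousOn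
  have hintw : ∀ (p w : Polynomial ℝ),
      IntervalIntegrable (fun x => (p.eval x - φ x) * w.eval x) volume a b := by
    intro p w
    apply ContinuousOn.intervalIntegrable
    rw [hcu]
    exact (p.continuous_aeval.continuousOn.sub hφ).mul w.continuous_aeval.continuousOn
  set E := degreeLTEquiv ℝ (q + 1) with hE
  -- the linear map sending a polynomial to its moments and endpoint value
  let S : Polynomial ℝ →ₗ[ℝ] (Fin q → ℝ) × ℝ :=
  { toFun := fun P => (fun i => ∫ x in a..b, P.eval x * x ^ (i : ℕ), P.eval b)
    map_add' := by
      intro P R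
      refine Prod.ext (funext fun i => ?_) (by simp)
      show (∫ x in a..b, (P + R).eval x * x ^ (i : ℕ))
        = (∫ x in a..b, P.eval x * x ^ (i : ℕ)) + ∫ x in a..b, R.eval x * x ^ (i : ℕ)
      rw [show (fun x => (P + R).eval x * x ^ (i : ℕ))
          = fun x => P.eval x * x ^ (i : ℕ) + R.eval x * x ^ (i : ℕ) from
        funext fun x => by simp [add_mul],
        intervalIntegral.integral_add (pint P i) (pint R i)]
    map_smul' := by
      intro c P
      refine Prod.ext (funext fun i => ?_) (by simp)
      show (∫ x in a..b, (c • P).eval x * x ^ (i : ℕ))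
        = c • ∫ x in a..b, P.eval x * x ^ (i : ℕ)
      rw [show (fun x => (c • P).eval x * x ^ (i : ℕ))
          = fun x => c * (P.eval x * x ^ (i : ℕ)) from
        funext fun x => by simp [mul_assoc],
        intervalIntegral.integral_const_mul]
      rfl }
  let T : (Fin (q + 1) → ℝ) →ₗ[ℝ] (Fin q → ℝ) × ℝ :=
    S.comp (((degreeLT ℝ (q + 1)).subtype).comp E.symm.toLinearMap)
  have hdegLT : ∀ v : Fin (q + 1) → ℝ, ((E.symm v : Polynomial ℝ)).natDegree ≤ q := by
    intro v
    rcases eq_or_ne ((E.symm v : Polynomial ℝ)) 0 with h0 | h0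
    · simp [h0]
    · have hm : ((E.symm v : Polynomial ℝ)) ∈ degreeLT ℝ (q + 1) := (E.symm v).2
      have := (natDegree_lt_iff_degree_lt h0).mpr (Polynomial.mem_degreeLT.mp hm)
      omega
  have hTinj : Function.Injective T := by
    rw [← LinearMap.ker_eq_bot, LinearMap.ker_eq_bot']
    intro v hv
    set P : Polynomial ℝ := (E.symm v : Polynomial ℝ) with hP
    have hv1 : ∀ i : Fin q, ∫ x in a..b, P.eval x * x ^ (i : ℕ) = 0 :=
      fun i => congrFun (congrArg Prod.fst hv) i
    have hv2 : P.eval b = 0 := congrArg Prod.snd hv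
    have horth := orth_of_monomials q a b (fun x => P.eval x) (fun i => pint P i)
      (fun i hi => hv1 ⟨i, hi⟩)
    have hP0 : P = 0 := key_inj q a b hab P (hdegLT v) horth hv2
    have : E.symm v = 0 := Subtype.ext hP0
    calc v = E (E.symm v) := (E.apply_symm_apply v).symm
    _ = 0 := by rw [this, map_zero]
  have hfr : Module.finrank ℝ (Fin (q + 1) → ℝ)
      = Module.finrank ℝ ((Fin q → ℝ) × ℝ) := by
    simp [Module.finrank_prod]
  obtain ⟨v, hv⟩ :=
    (LinearMap.injective_iff_surjective_of_finrank_eq_finrank hfr).mp hTinj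
      (fun i => ∫ x in a..b, φ x * x ^ (i : ℕ), φ b)
  set P : Polynomial ℝ := (E.symm v : Polynomial ℝ) with hP
  have hv1 : ∀ i : Fin q,
      (∫ x in a..b, P.eval x * x ^ (i : ℕ)) = ∫ x in a..b, φ x * x ^ (i : ℕ) :=
    fun i => congrFun (congrArg Prod.fst hv) i
  have hv2 : P.eval b = φ b := congrArg Prod.snd hv
  have hmono : ∀ i : ℕ, i < q → ∫ x in a..b, (P.eval x - φ x) * x ^ i = 0 := by
    intro i hi
    rw [show (fun x => (P.eval x - φ x) * x ^ i)
        = fun x => P.eval x * x ^ i - φ x * x ^ i from funext fun x => by ring,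
      intervalIntegral.integral_sub (pint P i) (hφint i), hv1 ⟨i, hi⟩, sub_self]
  have hfint : ∀ i : ℕ,
      IntervalIntegrable (fun x => (P.eval x - φ x) * x ^ i) volume a b := by
    intro i
    have := (pint P i).sub (hφint i)
    simpa [sub_mul] using this
  have horthP : ∀ w : Polynomial ℝ, w.degree < (q : ℕ) →
      ∫ x in a..b, (P.eval x - φ x) * w.eval x = 0 :=
    orth_of_monomials q a b (fun x => P.eval x - φ x) hfint hmono
  refine ⟨P, ⟨hdegLT v, horthP, hv2⟩, ?_⟩
  rintro P' ⟨hdeg', horth', hb'⟩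
  have hDorth : ∀ w : Polynomial ℝ, w.degree < (q : ℕ) →
      ∫ x in a..b, (P' - P).eval x * w.eval x = 0 := by
    intro w hw
    rw [show (fun x => (P' - P).eval x * w.eval x)
        = fun x => (P'.eval x - φ x) * w.eval x - (P.eval x - φ x) * w.eval x from
      funext fun x => by simp only [eval_sub]; ring,
      intervalIntegral.integral_sub (hintw P' w) (hintw P w), horth' w hw,
      horthP w hw, sub_self]
  have hD0 : P' - P = 0 :=
    key_inj q a b hab (P' - P)
      ((natDegree_sub_le P' P).trans (max_le hdeg' (hdegLT v)))
      hDorth (by simp [eval_sub, hb', hv2])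
  exact sub_eq_zero.mp hD0
end

section
/- Radau reconstruction: on a single interval $(a,b)$, for any polynomial $\varphi$ of degree $\le q$ on $(a,b)$ together with a prescribed left value $\varphi_{-}\in\mathbb{R}$ (defining the jump $[\varphi]=\varphi(a^+)-\varphi_{-}$), there exists a unique polynomial $\mathcal I\varphi$ of degree $\le q+1$ with $\mathcal I\varphi(a) = \varphi_{-}$ and $\int_a^b \partial_t(\mathcal I\varphi)\,\phi = \int_a^b \partial_t\varphi\,\phi + [\varphi]\,\phi(a^+)$ for all polynomials $\phi$ of degree $\le q$. -/
/-!
The difference `D` of two solutions has degree `≤ q + 1`, vanishes at `a`, and `D'` is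
`L²(a, b)`-orthogonal to all polynomials of degree `≤ q`, in particular to itself;
so `D' = 0` and `D = D(a) = 0`. Hence `I ↦ (I(a), ψ ↦ ∫ₐᵇ I' ψ)` is an injective linear map
from polynomials of degree `≤ q + 1` to `ℝ` times the dual of polynomials of degree `≤ q`;
both sides have dimension `q + 2`, so it is also onto, which gives existence.
-/

open Polynomial

namespace Polynomial

theorem mem_degreeLT_succ_iff {R : Type*} [Semiring R] {n : ℕ} {p : R[X]} :
    p ∈ degreeLT R (n + 1) ↔ p.natDegree ≤ n := by
  rw [mem_degreeLT, degree_lt_iff_coeff_zero, natDegree_le_iff_coeff_eq_zero]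
  simp only [Nat.add_one_le_iff]

section Pairing

variable {K : Type*} [Field K] (B : K[X] →ₗ[K] K[X] →ₗ[K] K)

theorem eq_zero_of_eval_eq_zero_of_pairing_derivative_eq_zero [CharZero K]
    (hB : ∀ p, B p p = 0 → p = 0) {a : K} {q : ℕ} {D : K[X]} (hD : D.natDegree ≤ q + 1)
    (hDa : D.eval a = 0) (horth : ∀ ψ : K[X], ψ.natDegree ≤ q → B (derivative D) ψ = 0) :
    D = 0 := by
  have hD' : derivative D = 0 :=
    hB _ (horth _ ((natDegree_derivative_le D).trans (by omega)))
  rw [eq_C_of_derivative_eq_zero hD', eval_C] at hDa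
  rw [eq_C_of_derivative_eq_zero hD', hDa, C_0]

noncomputable def evalDerivativePairing (a : K) (q : ℕ) :
    degreeLT K (q + 2) →ₗ[K] K × Module.Dual K (degreeLT K (q + 1)) :=
  ((leval a).comp (degreeLT K (q + 2)).subtype).prod
    ((B.compl₁₂ derivative (degreeLT K (q + 1)).subtype).comp (degreeLT K (q + 2)).subtype)

theorem evalDerivativePairing_apply (a : K) (q : ℕ) (I : degreeLT K (q + 2)) :
    evalDerivativePairing B a q I
      = ((I : K[X]).eval a, (B (derivative (I : K[X]))).comp (degreeLT K (q + 1)).subtype) :=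
  rfl

theorem evalDerivativePairing_injective [CharZero K] (hB : ∀ p, B p p = 0 → p = 0)
    (a : K) (q : ℕ) :
    Function.Injective (evalDerivativePairing B a q) := by
  rw [← LinearMap.ker_eq_bot, Submodule.eq_bot_iff]
  rintro ⟨D, hD⟩ hTD
  rw [LinearMap.mem_ker, evalDerivativePairing_apply, Prod.mk_eq_zero] at hTD
  obtain ⟨hDa, horth⟩ := hTD
  refine Subtype.ext (eq_zero_of_eval_eq_zero_of_pairing_derivative_eq_zero B hB
    (mem_degreeLT_succ_iff.mp hD) hDa fun ψ hψ => ?_)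
  exact LinearMap.congr_fun horth ⟨ψ, mem_degreeLT_succ_iff.mpr hψ⟩

theorem evalDerivativePairing_surjective [CharZero K] (hB : ∀ p, B p p = 0 → p = 0)
    (a : K) (q : ℕ) :
    Function.Surjective (evalDerivativePairing B a q) := by
  have hdim : Module.finrank K (degreeLT K (q + 2))
      = Module.finrank K (K × Module.Dual K (degreeLT K (q + 1))) := by
    simp only [Module.finrank_prod, Subspace.dual_finrank_eq, Module.finrank_self,
      Module.finrank_eq_card_basis (degreeLT.basis K _), Fintype.card_fin]
    omega
  exact (LinearMap.injective_iff_surjective_of_finrank_eq_finrank hdim).mp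
    (evalDerivativePairing_injective B hB a q)

theorem existsUnique_eval_eq_and_pairing_derivative_eq [CharZero K]
    (hB : ∀ p, B p p = 0 → p = 0) (q : ℕ) (a c : K) (ℓ : K[X] →ₗ[K] K) :
    ∃! I : K[X], I.natDegree ≤ q + 1 ∧ I.eval a = c ∧
      ∀ ψ : K[X], ψ.natDegree ≤ q → B (derivative I) ψ = ℓ ψ := by
  obtain ⟨⟨I, hI⟩, hTI⟩ := evalDerivativePairing_surjective B hB a q
    (c, ℓ.comp (degreeLT K (q + 1)).subtype)
  rw [evalDerivativePairing_apply, Prod.mk.injEq] at hTI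
  obtain ⟨hIa, hIℓ⟩ := hTI
  have hIsol : ∀ ψ : K[X], ψ.natDegree ≤ q → B (derivative I) ψ = ℓ ψ := fun ψ hψ =>
    LinearMap.congr_fun hIℓ ⟨ψ, mem_degreeLT_succ_iff.mpr hψ⟩
  refine ⟨I, ⟨mem_degreeLT_succ_iff.mp hI, hIa, hIsol⟩, ?_⟩
  rintro J ⟨hJ, hJa, hJsol⟩
  refine sub_eq_zero.mp (eq_zero_of_eval_eq_zero_of_pairing_derivative_eq_zero B hB (a := a)
    ((natDegree_sub_le_of_le hJ (mem_degreeLT_succ_iff.mp hI)).trans (max_self _).le) ?_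
    fun ψ hψ => ?_)
  · rw [eval_sub, hJa, hIa, sub_self]
  · rw [derivative_sub, map_sub, LinearMap.sub_apply, hJsol ψ hψ, hIsol ψ hψ, sub_self]

end Pairing

noncomputable def intervalIntegralₗ (a b : ℝ) : ℝ[X] →ₗ[ℝ] ℝ where
  toFun p := ∫ x in a..b, p.eval x
  map_add' p r := by
    simp only [eval_add]
    exact intervalIntegral.integral_add (p.continuous.intervalIntegrable a b)
      (r.continuous.intervalIntegrable a b)
  map_smul' c p := by
    simp only [eval_smul, smul_eq_mul, RingHom.id_apply]
    exact intervalIntegral.integral_const_mul c _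

noncomputable def intervalL2Pairing (a b : ℝ) : ℝ[X] →ₗ[ℝ] ℝ[X] →ₗ[ℝ] ℝ :=
  (LinearMap.mul ℝ ℝ[X]).compr₂ (intervalIntegralₗ a b)

@[simp]
theorem intervalL2Pairing_apply (a b : ℝ) (p r : ℝ[X]) :
    intervalL2Pairing a b p r = ∫ x in a..b, p.eval x * r.eval x := by
  simp [intervalL2Pairing, intervalIntegralₗ]

theorem eq_zero_of_intervalL2Pairing_self_eq_zero {a b : ℝ} (hab : a < b) {p : ℝ[X]}
    (hp : intervalL2Pairing a b p p = 0) : p = 0 := by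
  by_contra hp0
  obtain ⟨c, hc, hpc⟩ := ((Set.Icc_infinite hab).sdiff (p.finite_setOfPred_isRoot hp0)).nonempty
  rw [intervalL2Pairing_apply] at hp
  exact (intervalIntegral.integral_pos (f := fun x => p.eval x * p.eval x) hab
    (p.continuous.mul p.continuous).continuousOn (fun x _ => mul_self_nonneg _)
    ⟨c, hc, mul_self_pos.mpr hpc⟩).ne' hp

end Polynomial

theorem radau_reconstruction_exists_unique_general
    (q : ℕ) (a b : ℝ) (hab : a < b)
    (φ : Polynomial ℝ) (φminus : ℝ) :
    ∃! I : Polynomial ℝ, I.natDegree ≤ q + 1 ∧ I.eval a = φminus ∧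
      ∀ ψ : Polynomial ℝ, ψ.natDegree ≤ q →
        ∫ x in a..b, (Polynomial.derivative I).eval x * ψ.eval x
          = (∫ x in a..b, (Polynomial.derivative φ).eval x * ψ.eval x)
            + (φ.eval a - φminus) * ψ.eval a := by
  simpa only [intervalL2Pairing_apply, LinearMap.add_apply, LinearMap.smul_apply, leval_apply,
    smul_eq_mul] using existsUnique_eval_eq_and_pairing_derivative_eq (intervalL2Pairing a b)
      (fun _ => eq_zero_of_intervalL2Pairing_self_eq_zero hab) q a φminus
      (intervalL2Pairing a b (derivative φ) + (φ.eval a - φminus) • leval a)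

/-- Radau reconstruction on a single interval: for a polynomial `φ` of degree `≤ q`
and a prescribed left value `φminus`, there is a unique polynomial `Iφ` of degree
`≤ q + 1` with `Iφ(a) = φminus` and
`∫ₐᵇ (Iφ)' ψ = ∫ₐᵇ φ' ψ + (φ(a⁺) - φminus) ψ(a⁺)` for all polynomials `ψ` of
degree `≤ q`. -/
theorem radau_reconstruction_exists_unique
    (q : ℕ) (a b : ℝ) (hab : a < b)
    (φ : Polynomial ℝ) (hφ : φ.natDegree ≤ q) (φminus : ℝ) :
    ∃! I : Polynomial ℝ, I.natDegree ≤ q + 1 ∧ I.eval a = φminus ∧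
      ∀ ψ : Polynomial ℝ, ψ.natDegree ≤ q →
        ∫ x in a..b, (Polynomial.derivative I).eval x * ψ.eval x
          = (∫ x in a..b, (Polynomial.derivative φ).eval x * ψ.eval x)
            + (φ.eval a - φminus) * ψ.eval a :=
  radau_reconstruction_exists_unique_general q a b hab φ φminus
end
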